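/- Let δ be real with 0 ≤ δ < 1, let h, ζ, A, B, u be complex numbers with |h| ≤ δ, |ζ| < 1 and |u| = 1. Then |ζ − h|²·|A − u·conj(B)|² / (|1 − conj(h)·ζ|²·(1 − |h|²)²) + (1 − |ζ|²)·( |B|²/(|1 − conj(h)·ζ|²·(1 − |h|²)) + |ζ − h|²·|A|²/(|1 − conj(h)·ζ|⁴·(1 − |h|²)) ) ≥ (1 − δ)²·min{(|A| − |B|)², |B|²} / 4. -/

import Mathlib

/-!
Writing `a = |ζ - h|²`, `s = 1 - |ζ|²`, `d = 1 - |h|²`, the classical identity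
`|1 - h̄ζ|² = a + s d` turns the first two terms into a weighted average (weights `a` and `s d`)
of `|A - u B̄|² / d²` and `|B|² / d²`. As `d ≤ 1` and `|A - u B̄| ≥ ||A| - |B||`, that average
is at least `min ((|A| - |B|)², |B|²)`, so the estimate even holds without the factor `(1 - δ)² / 4`.
-/

open Complex

theorem Complex.sq_norm_one_sub_conj_mul (h ζ : ℂ) :
    ‖1 - starRingEnd ℂ h * ζ‖ ^ 2 = ‖ζ - h‖ ^ 2 + (1 - ‖ζ‖ ^ 2) * (1 - ‖h‖ ^ 2) := by
  simp only [Complex.sq_norm, Complex.normSq_apply, Complex.sub_re, Complex.sub_im,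
    Complex.mul_re, Complex.mul_im, Complex.one_re, Complex.one_im, Complex.conj_re,
    Complex.conj_im]
  ring

theorem Complex.sq_norm_sub_norm_le_sq_norm_sub_mul_conj (A B : ℂ) {u : ℂ} (hu : ‖u‖ = 1) :
    (‖A‖ - ‖B‖) ^ 2 ≤ ‖A - u * starRingEnd ℂ B‖ ^ 2 := by
  have hB : ‖u * starRingEnd ℂ B‖ = ‖B‖ := by rw [norm_mul, hu, Complex.norm_conj, one_mul]
  rw [← sq_abs, ← hB]
  exact pow_le_pow_left₀ (abs_nonneg _) (abs_norm_sub_norm_le _ _) 2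

theorem min_le_mul_div_add_mul_div {a s d X Y : ℝ} (ha : 0 ≤ a) (hs : 0 < s) (hd : 0 < d)
    (hd1 : d ≤ 1) (hX : 0 ≤ X) (hY : 0 ≤ Y) :
    min X Y ≤ a * X / ((a + s * d) * d ^ 2) + s * (Y / ((a + s * d) * d)) := by
  have hc : 0 < a + s * d := by positivity
  have hX' : a * min X Y ≤ a * X / d ^ 2 :=
    (mul_le_mul_of_nonneg_left (min_le_left X Y) ha).trans
      (le_div_self (by positivity) (by positivity) (pow_le_one₀ hd.le hd1))
  have hY' : s * d * min X Y ≤ s * Y / d := by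
    rw [le_div_iff₀ hd]
    calc s * d * min X Y * d = s * min X Y * (d * d) := by ring
      _ ≤ s * Y * (d * d) := by gcongr; exact min_le_right X Y
      _ ≤ s * Y := mul_le_of_le_one_right (by positivity) (mul_le_one₀ hd1 hd.le hd1)
  have hsplit : a * X / ((a + s * d) * d ^ 2) + s * (Y / ((a + s * d) * d))
      = (a * X / d ^ 2 + s * Y / d) / (a + s * d) := by
    field_simp
  rw [hsplit, le_div_iff₀ hc]
  linarith

/-- Quantitative core of the lower estimate for the determinant of the complex Hessian of
`−log(−r₀)` on a holomorphic disc bundle. -/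
theorem stmt_12 (δ : ℝ) (hδ0 : 0 ≤ δ) (hδ1 : δ < 1) (h ζ A B u : ℂ)
    (hh : ‖h‖ ≤ δ) (hζ : ‖ζ‖ < 1) (hu : ‖u‖ = 1) :
    (1 - δ) ^ 2 * min ((‖A‖ - ‖B‖) ^ 2) (‖B‖ ^ 2) / 4
      ≤ ‖ζ - h‖ ^ 2 * ‖A - u * (starRingEnd ℂ) B‖ ^ 2
          / (‖1 - (starRingEnd ℂ) h * ζ‖ ^ 2 * (1 - ‖h‖ ^ 2) ^ 2)
        + (1 - ‖ζ‖ ^ 2) *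
          (‖B‖ ^ 2
              / (‖1 - (starRingEnd ℂ) h * ζ‖ ^ 2 * (1 - ‖h‖ ^ 2))
            + ‖ζ - h‖ ^ 2 * ‖A‖ ^ 2
              / (‖1 - (starRingEnd ℂ) h * ζ‖ ^ 4 * (1 - ‖h‖ ^ 2))) := by
  set m := min ((‖A‖ - ‖B‖) ^ 2) (‖B‖ ^ 2)
  have hm : 0 ≤ m := le_min (sq_nonneg _) (sq_nonneg _)
  have hs : 0 < 1 - ‖ζ‖ ^ 2 := sub_pos.2 (pow_lt_one₀ (norm_nonneg ζ) hζ two_ne_zero)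
  have hd : 0 < 1 - ‖h‖ ^ 2 :=
    sub_pos.2 (pow_lt_one₀ (norm_nonneg h) (hh.trans_lt hδ1) two_ne_zero)
  have hd1 : 1 - ‖h‖ ^ 2 ≤ 1 := sub_le_self _ (sq_nonneg _)
  have hδ : (1 - δ) ^ 2 ≤ 1 := pow_le_one₀ (by linarith) (by linarith)
  calc (1 - δ) ^ 2 * m / 4 ≤ m := by nlinarith
    _ ≤ min (‖A - u * (starRingEnd ℂ) B‖ ^ 2) (‖B‖ ^ 2) :=
      min_le_min_right _ (Complex.sq_norm_sub_norm_le_sq_norm_sub_mul_conj A B hu)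
    _ ≤ ‖ζ - h‖ ^ 2 * ‖A - u * (starRingEnd ℂ) B‖ ^ 2
          / (‖1 - (starRingEnd ℂ) h * ζ‖ ^ 2 * (1 - ‖h‖ ^ 2) ^ 2)
        + (1 - ‖ζ‖ ^ 2) * (‖B‖ ^ 2 / (‖1 - (starRingEnd ℂ) h * ζ‖ ^ 2 * (1 - ‖h‖ ^ 2))) := by
      rw [Complex.sq_norm_one_sub_conj_mul]
      exact min_le_mul_div_add_mul_div (sq_nonneg _) hs hd hd1 (sq_nonneg _) (sq_nonneg _)
    _ ≤ _ := by
      rw [mul_add, ← add_assoc]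
      exact le_add_of_nonneg_right (by positivity)
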